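/- arXiv:2601.07403 — 6 statements merged into one kernel-verified Lean document; each statement's English description precedes it below -/
import Mathlib

section
/- Let K be the 7×7 real matrix (the next-generation matrix FV⁻¹ of the two-strain dengue model) whose only nonzero entries are K₁₅ = K₁₇ = αS*/(κM*), K₂₆ = K₂₇ = αS*/(κM*), K₅₁ = βU*/((γ+μ)N*), K₅₄ = βU*/((γ+μ+δ)N*), K₆₂ = βU*/((γ+μ)N*), K₆₃ = βU*/((γ+μ+δ)N*), all other entries being zero. Setting A₁ = αS*/(κM*) and A₂ = βU*/((γ+μ)N*), the characteristic polynomial of K equals χ_K(P) = P³ (P⁴ − 2A₁A₂P² + A₁²A₂²) = P³ (P² − A₁A₂)². -/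
open Polynomial


private lemma cv5 {α : Type*} (x0 x1 x2 x3 x4 x5 x6 : α) :
    ![x0,x1,x2,x3,x4,x5,x6] 5 = x5 := rfl
private lemma cv6 {α : Type*} (x0 x1 x2 x3 x4 x5 x6 : α) :
    ![x0,x1,x2,x3,x4,x5,x6] 6 = x6 := rfl

private lemma p75 {α : Type*} (x : α) (t : Fin 6 → α) : Matrix.vecCons x t 5 = t 4 := rfl
private lemma p76 {α : Type*} (x : α) (t : Fin 6 → α) : Matrix.vecCons x t 6 = t 5 := rfl
private lemma p64 {α : Type*} (x : α) (t : Fin 5 → α) : Matrix.vecCons x t 4 = t 3 := rfl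
private lemma p65 {α : Type*} (x : α) (t : Fin 5 → α) : Matrix.vecCons x t 5 = t 4 := rfl
private lemma p53 {α : Type*} (x : α) (t : Fin 4 → α) : Matrix.vecCons x t 3 = t 2 := rfl
private lemma p54 {α : Type*} (x : α) (t : Fin 4 → α) : Matrix.vecCons x t 4 = t 3 := rfl
private lemma p42 {α : Type*} (x : α) (t : Fin 3 → α) : Matrix.vecCons x t 2 = t 1 := rfl
private lemma p43 {α : Type*} (x : α) (t : Fin 3 → α) : Matrix.vecCons x t 3 = t 2 := rfl
private lemma p31 {α : Type*} (x : α) (t : Fin 2 → α) : Matrix.vecCons x t 1 = t 0 := rfl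
private lemma p32 {α : Type*} (x : α) (t : Fin 2 → α) : Matrix.vecCons x t 2 = t 1 := rfl
private lemma p21 {α : Type*} (x : α) (t : Fin 1 → α) : Matrix.vecCons x t 1 = t 0 := rfl

set_option maxHeartbeats 12000000 in
set_option maxRecDepth 8000 in
private lemma d7 (a b c : ℝ) :
    (Matrix.of
      ![![X, 0, 0, 0, -C a, 0, -C a],
        ![0, X, 0, 0, 0, -C a, -C a],
        ![0, 0, X, 0, 0, 0, 0],
        ![0, 0, 0, X, 0, 0, 0],
        ![-C b, 0, 0, -C c, X, 0, 0],
        ![0, -C b, -C c, 0, 0, X, 0],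
        ![0, 0, 0, 0, 0, 0, X]] : Matrix (Fin 7) (Fin 7) ℝ[X]).det
    = X ^ 3 * (X ^ 2 - C (a * b)) ^ 2 := by
  set M : Matrix (Fin 7) (Fin 7) ℝ[X] := Matrix.of
      ![![X, 0, 0, 0, -C a, 0, -C a],
        ![0, X, 0, 0, 0, -C a, -C a],
        ![0, 0, X, 0, 0, 0, 0],
        ![0, 0, 0, X, 0, 0, 0],
        ![-C b, 0, 0, -C c, X, 0, 0],
        ![0, -C b, -C c, 0, 0, X, 0],
        ![0, 0, 0, 0, 0, 0, X]] with hM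
  have h0 : M.submatrix Fin.succ (Fin.succAbove 0) = Matrix.of
      ![![X, 0, 0, 0, -C a, -C a],
        ![0, X, 0, 0, 0, 0],
        ![0, 0, X, 0, 0, 0],
        ![0, 0, -C c, X, 0, 0],
        ![-C b, -C c, 0, 0, X, 0],
        ![0, 0, 0, 0, 0, X]] := by
    rw [← Matrix.ext_iff]; intro i j; fin_cases i <;> fin_cases j <;> rfl
  have h4 : M.submatrix Fin.succ ((Fin.succ 0).succ.succ.succ.succAbove) = Matrix.of
      ![![0, X, 0, 0, -C a, -C a],
        ![0, 0, X, 0, 0, 0],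
        ![0, 0, 0, X, 0, 0],
        ![-C b, 0, 0, -C c, 0, 0],
        ![0, -C b, -C c, 0, X, 0],
        ![0, 0, 0, 0, 0, X]] := by
    rw [← Matrix.ext_iff]; intro i j; fin_cases i <;> fin_cases j <;> rfl
  have h6 : M.submatrix Fin.succ ((Fin.succ 0).succ.succ.succ.succ.succ.succAbove) = Matrix.of
      ![![0, X, 0, 0, 0, -C a],
        ![0, 0, X, 0, 0, 0],
        ![0, 0, 0, X, 0, 0],
        ![-C b, 0, 0, -C c, X, 0],
        ![0, -C b, -C c, 0, 0, X],
        ![0, 0, 0, 0, 0, 0]] := by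
    rw [← Matrix.ext_iff]; intro i j; fin_cases i <;> fin_cases j <;> rfl
  rw [Matrix.det_succ_row_zero]
  simp only [Fin.sum_univ_succ, Fin.sum_univ_zero, Matrix.of_apply, hM,
    Matrix.cons_val_zero, Matrix.cons_val_succ,
    neg_mul, one_mul, mul_zero, zero_mul, neg_zero, add_zero, zero_add, mul_neg, neg_neg,
    pow_succ, pow_zero, Fin.val_succ, Fin.val_zero]
  rw [h0, h4, h6]
  simp [Matrix.det_succ_row_zero, Fin.sum_univ_succ]
  simp (config := {decide := true}) [Fin.succAbove]
  ring

set_option maxHeartbeats 1000000 in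
set_option maxRecDepth 8000 in
lemma gen_charpoly (a b c : ℝ) :
    (Matrix.of
      ![![0, 0, 0, 0, a, 0, a],
        ![0, 0, 0, 0, 0, a, a],
        ![0, 0, 0, 0, 0, 0, 0],
        ![0, 0, 0, 0, 0, 0, 0],
        ![b, 0, 0, c, 0, 0, 0],
        ![0, b, c, 0, 0, 0, 0],
        ![0, 0, 0, 0, 0, 0, 0]] : Matrix (Fin 7) (Fin 7) ℝ).charpoly
      = X ^ 3 * (X ^ 2 - C (a * b)) ^ 2 := by
  have hchar : Matrix.charmatrix (Matrix.of
      ![![0, 0, 0, 0, a, 0, a],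
        ![0, 0, 0, 0, 0, a, a],
        ![0, 0, 0, 0, 0, 0, 0],
        ![0, 0, 0, 0, 0, 0, 0],
        ![b, 0, 0, c, 0, 0, 0],
        ![0, b, c, 0, 0, 0, 0],
        ![0, 0, 0, 0, 0, 0, 0]] : Matrix (Fin 7) (Fin 7) ℝ) = Matrix.of
      ![![X, 0, 0, 0, -C a, 0, -C a],
        ![0, X, 0, 0, 0, -C a, -C a],
        ![0, 0, X, 0, 0, 0, 0],
        ![0, 0, 0, X, 0, 0, 0],
        ![-C b, 0, 0, -C c, X, 0, 0],
        ![0, -C b, -C c, 0, 0, X, 0],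
        ![0, 0, 0, 0, 0, 0, X]] := by
    rw [← Matrix.ext_iff]
    intro i j
    fin_cases i <;> fin_cases j <;>
      simp [Matrix.charmatrix_apply, Matrix.one_apply, Matrix.vecHead, Matrix.vecTail,
        p75, p76, p64, p65, p53, p54, p42, p43, p31, p32, p21]
  rw [Matrix.charpoly, hchar, d7]


/-- The next-generation matrix `K = FV⁻¹` of the two-strain dengue model at the
disease-free equilibrium: `K₁₅ = K₁₇ = K₂₆ = K₂₇ = αS*/(κM*)`,
`K₅₁ = K₆₂ = βU*/((γ+μ)N*)`, `K₅₄ = K₆₃ = βU*/((γ+μ+δ)N*)`, all other entries 0. -/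
noncomputable def dengueNGM (α β γ μ δ κ Sstar Mstar Ustar Nstar : ℝ) :
    Matrix (Fin 7) (Fin 7) ℝ :=
  Matrix.of
    ![![0, 0, 0, 0, α * Sstar / (κ * Mstar), 0, α * Sstar / (κ * Mstar)],
      ![0, 0, 0, 0, 0, α * Sstar / (κ * Mstar), α * Sstar / (κ * Mstar)],
      ![0, 0, 0, 0, 0, 0, 0],
      ![0, 0, 0, 0, 0, 0, 0],
      ![β * Ustar / ((γ + μ) * Nstar), 0, 0, β * Ustar / ((γ + μ + δ) * Nstar), 0, 0, 0],
      ![0, β * Ustar / ((γ + μ) * Nstar), β * Ustar / ((γ + μ + δ) * Nstar), 0, 0, 0, 0],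
      ![0, 0, 0, 0, 0, 0, 0]]

/-- Setting `A₁ = αS*/(κM*)` and `A₂ = βU*/((γ+μ)N*)`, the characteristic polynomial
of the next-generation matrix `K` equals
`P³ (P⁴ − 2A₁A₂ P² + A₁²A₂²) = P³ (P² − A₁A₂)²`. -/
theorem dengue_NGM_charpoly
    (α β γ μ δ κ Sstar Mstar Ustar Nstar : ℝ)
    (hα : 0 < α) (hβ : 0 < β) (hγ : 0 < γ) (hμ : 0 < μ) (hκ : 0 < κ)
    (hδ : 0 ≤ δ) (hS : 0 < Sstar) (hM : 0 < Mstar) (hU : 0 < Ustar) (hN : 0 < Nstar)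
    (A₁ A₂ : ℝ) (hA₁ : A₁ = α * Sstar / (κ * Mstar))
    (hA₂ : A₂ = β * Ustar / ((γ + μ) * Nstar)) :
    (dengueNGM α β γ μ δ κ Sstar Mstar Ustar Nstar).charpoly =
        X ^ 3 * (X ^ 4 - C (2 * A₁ * A₂) * X ^ 2 + C (A₁ ^ 2 * A₂ ^ 2)) ∧
      (dengueNGM α β γ μ δ κ Sstar Mstar Ustar Nstar).charpoly =
        X ^ 3 * (X ^ 2 - C (A₁ * A₂)) ^ 2 := by
  subst hA₁ hA₂
  have hK : (dengueNGM α β γ μ δ κ Sstar Mstar Ustar Nstar).charpoly =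
      X ^ 3 * (X ^ 2 - C (α * Sstar / (κ * Mstar) * (β * Ustar / ((γ + μ) * Nstar)))) ^ 2 :=
    gen_charpoly (α * Sstar / (κ * Mstar)) (β * Ustar / ((γ + μ) * Nstar))
      (β * Ustar / ((γ + μ + δ) * Nstar))
  refine ⟨?_, hK⟩
  rw [hK]
  simp only [map_mul, map_pow, map_ofNat, map_div₀, map_add]
  ring
end

section
/- Let α, β, γ, μ, κ, Λ_N, Λ_M be positive and δ ≥ 0, and let K be the 7×7 next-generation matrix of the two-strain dengue model with entries K₁₅ = K₁₇ = K₂₆ = K₂₇ = αS*/(κM*), K₅₁ = K₆₂ = βU*/((γ+μ)N*), K₅₄ = K₆₃ = βU*/((γ+μ+δ)N*), all other entries zero, where S* = N* = Λ_N/μ and U* = M* = Λ_M/κ. Then the spectral radius of K equals √(αβ/(κ(γ+μ))); that is, R₀ = √(A₁A₂) with A₁ = αS*/(κM*) and A₂ = βU*/((γ+μ)N*). -/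
open Polynomial
open scoped Matrix

theorem spectralRadius_eq_of_mem_of_forall_norm_le {𝕜 A : Type*} [NormedField 𝕜] [Ring A]
    [Algebra 𝕜 A] {a : A} {r : 𝕜} (hr : r ∈ spectrum 𝕜 a)
    (h : ∀ z ∈ spectrum 𝕜 a, ‖z‖ ≤ ‖r‖) : spectralRadius 𝕜 a = ‖r‖₊ :=
  le_antisymm (iSup₂_le fun z hz ↦ by exact_mod_cast h z hz)
    (le_iSup₂ (f := fun z _ ↦ (‖z‖₊ : ENNReal)) r hr)

theorem spectralRadius_toContinuousLinearMap_mulVecLin {𝕜 n : Type*}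
    [NontriviallyNormedField 𝕜] [CompleteSpace 𝕜] [Fintype n] [DecidableEq n] (A : Matrix n n 𝕜) :
    spectralRadius 𝕜 (LinearMap.toContinuousLinearMap A.mulVecLin) = spectralRadius 𝕜 A := by
  change spectralRadius 𝕜 (Module.End.toContinuousLinearMap (n → 𝕜) (Matrix.toLinAlgEquiv' A)) = _
  rw [spectralRadius, spectralRadius, AlgEquiv.spectrum_eq, AlgEquiv.spectrum_eq]

section Pattern

variable {R : Type*}

def dengueNGMPattern [Zero R] (a b c : R) : Matrix (Fin 7) (Fin 7) R :=
  Matrix.of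
    ![![0, 0, 0, 0, a, 0, a],
      ![0, 0, 0, 0, 0, a, a],
      ![0, 0, 0, 0, 0, 0, 0],
      ![0, 0, 0, 0, 0, 0, 0],
      ![b, 0, 0, c, 0, 0, 0],
      ![0, b, c, 0, 0, 0, 0],
      ![0, 0, 0, 0, 0, 0, 0]]

theorem dengueNGM_eq_dengueNGMPattern (α β γ μ δ κ S M U N : ℝ) :
    dengueNGM α β γ μ δ κ S M U N =
      dengueNGMPattern (α * S / (κ * M)) (β * U / ((γ + μ) * N)) (β * U / ((γ + μ + δ) * N)) :=
  rfl

theorem dengueNGMPattern_map {S : Type*} [Semiring R] [Semiring S] (f : R →+* S) (a b c : R) :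
    (dengueNGMPattern a b c).map f = dengueNGMPattern (f a) (f b) (f c) := by
  ext i j
  fin_cases i <;> fin_cases j <;> simp [dengueNGMPattern]

theorem dengueNGMPattern_pow_three [CommRing R] (a b c : R) :
    dengueNGMPattern a b c ^ 3 = (a * b) • dengueNGMPattern a b c := by
  ext i j
  fin_cases i <;> fin_cases j <;>
    simp [dengueNGMPattern, pow_succ, Matrix.mul_apply, Fin.sum_univ_succ] <;> ring

theorem dengueNGMPattern_mulVec [CommRing R] {a b c s : R} (hs : s * s = a * b) :
    dengueNGMPattern a b c *ᵥ ![s, 0, 0, 0, b, 0, 0] = s • ![s, 0, 0, 0, b, 0, 0] := by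
  ext i
  fin_cases i <;> simp [dengueNGMPattern, Matrix.mulVec, dotProduct, Fin.sum_univ_succ] <;> grind

end Pattern

section Spectrum

variable {𝕜 : Type*}

theorem mem_spectrum_dengueNGMPattern [Field 𝕜] {a b c r : 𝕜} (hr : r * r = a * b) (hr0 : r ≠ 0) :
    r ∈ spectrum 𝕜 (dengueNGMPattern a b c) := by
  rw [← Matrix.spectrum_toLin']
  refine (Module.End.hasEigenvalue_of_hasEigenvector
    (x := ![r, 0, 0, 0, b, 0, 0]) ⟨?_, ?_⟩).mem_spectrum
  · exact Module.End.mem_eigenspace_iff.2 (dengueNGMPattern_mulVec hr)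
  · exact fun h ↦ hr0 (congrFun h 0)

theorem pow_three_eq_of_mem_spectrum_dengueNGMPattern [Field 𝕜] {a b c z : 𝕜}
    (hz : z ∈ spectrum 𝕜 (dengueNGMPattern a b c)) : z ^ 3 = a * b * z := by
  have hp : aeval (dengueNGMPattern a b c) (X ^ 3 - C (a * b) * X) = 0 := by
    simp [dengueNGMPattern_pow_three, Algebra.smul_def]
  have := spectrum.subset_polynomial_aeval _ (X ^ 3 - C (a * b) * X) ⟨z, hz, rfl⟩
  rw [hp, spectrum.zero_eq] at this
  simpa [sub_eq_zero] using this

theorem spectralRadius_dengueNGMPattern [NormedField 𝕜] {a b c r : 𝕜} (hr : r * r = a * b)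
    (hr0 : r ≠ 0) : spectralRadius 𝕜 (dengueNGMPattern a b c) = ‖r‖₊ := by
  refine spectralRadius_eq_of_mem_of_forall_norm_le (mem_spectrum_dengueNGMPattern hr hr0) ?_
  intro z hz
  have hz3 : z * (z * z - r * r) = 0 := by
    linear_combination pow_three_eq_of_mem_spectrum_dengueNGMPattern hz - z * hr
  rcases mul_eq_zero.1 hz3 with rfl | hzr
  · simp
  · have : ‖z‖ * ‖z‖ = ‖r‖ * ‖r‖ := by rw [← norm_mul, ← norm_mul, sub_eq_zero.1 hzr]
    exact ((mul_self_inj (norm_nonneg z) (norm_nonneg r)).1 this).le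

end Spectrum

theorem dengue_NGM_spectral_radius_general
    (ΛN ΛM α β γ μ δ κ : ℝ)
    (hΛN : 0 < ΛN) (hΛM : 0 < ΛM) (hα : 0 < α) (hβ : 0 < β) (hγ : 0 < γ)
    (hμ : 0 < μ) (hκ : 0 < κ)
    (Sstar Nstar Ustar Mstar A₁ A₂ : ℝ)
    (hS : Sstar = ΛN / μ) (hN : Nstar = ΛN / μ)
    (hU : Ustar = ΛM / κ) (hM : Mstar = ΛM / κ)
    (hA₁ : A₁ = α * Sstar / (κ * Mstar)) (hA₂ : A₂ = β * Ustar / ((γ + μ) * Nstar)) :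
    spectralRadius ℂ
        (LinearMap.toContinuousLinearMap
          (Matrix.mulVecLin
            ((dengueNGM α β γ μ δ κ Sstar Mstar Ustar Nstar).map
              (algebraMap ℝ ℂ)))) =
        ENNReal.ofReal (Real.sqrt (α * β / (κ * (γ + μ)))) ∧
      Real.sqrt (A₁ * A₂) = Real.sqrt (α * β / (κ * (γ + μ))) := by
  set R₀ := Real.sqrt (α * β / (κ * (γ + μ)))
  have hA : A₁ * A₂ = α * β / (κ * (γ + μ)) := by
    subst hA₁ hA₂ hS hN hU hM
    field_simp
  have hR₀ : 0 < R₀ := Real.sqrt_pos.2 (by positivity)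
  have hR₀sq : R₀ * R₀ = A₁ * A₂ := hA ▸ Real.mul_self_sqrt (by positivity)
  refine ⟨?_, by rw [hA]⟩
  rw [dengueNGM_eq_dengueNGMPattern, ← hA₁, ← hA₂, dengueNGMPattern_map,
    Complex.coe_algebraMap, spectralRadius_toContinuousLinearMap_mulVecLin,
    spectralRadius_dengueNGMPattern (r := (R₀ : ℂ)) (by exact_mod_cast hR₀sq)
      (by exact_mod_cast hR₀.ne'),
    ← ENNReal.ofReal_coe_nnreal, coe_nnnorm, Complex.norm_real, Real.norm_of_nonneg hR₀.le]

/-- With `S* = N* = Λ_N/μ` and `U* = M* = Λ_M/κ`, the spectral radius of the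
next-generation matrix `K` (i.e. the basic reproduction number `R₀`) equals
`√(αβ/(κ(γ+μ))) = √(A₁A₂)` with `A₁ = αS*/(κM*)`, `A₂ = βU*/((γ+μ)N*)`. -/
theorem dengue_NGM_spectral_radius
    (ΛN ΛM α β γ μ δ κ : ℝ)
    (hΛN : 0 < ΛN) (hΛM : 0 < ΛM) (hα : 0 < α) (hβ : 0 < β) (hγ : 0 < γ)
    (hμ : 0 < μ) (hκ : 0 < κ) (hδ : 0 ≤ δ)
    (Sstar Nstar Ustar Mstar A₁ A₂ : ℝ)
    (hS : Sstar = ΛN / μ) (hN : Nstar = ΛN / μ)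
    (hU : Ustar = ΛM / κ) (hM : Mstar = ΛM / κ)
    (hA₁ : A₁ = α * Sstar / (κ * Mstar)) (hA₂ : A₂ = β * Ustar / ((γ + μ) * Nstar)) :
    spectralRadius ℂ
        (LinearMap.toContinuousLinearMap
          (Matrix.mulVecLin
            ((dengueNGM α β γ μ δ κ Sstar Mstar Ustar Nstar).map
              (algebraMap ℝ ℂ)))) =
        ENNReal.ofReal (Real.sqrt (α * β / (κ * (γ + μ)))) ∧
      Real.sqrt (A₁ * A₂) = Real.sqrt (α * β / (κ * (γ + μ))) :=
  dengue_NGM_spectral_radius_general ΛN ΛM α β γ μ δ κ hΛN hΛM hα hβ hγ hμ hκ Sstar Nstar Ustar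
    Mstar A₁ A₂ hS hN hU hM hA₁ hA₂
end

section
/- Let Λ_N, Λ_M, μ, κ, γ, ν, α, σ, β be positive, δ = 0, and suppose R₀ = √(αβ/(κ(γ+μ))) > 1. Define φ = (αβμ/((γ+μ)(α+μ)))·(1 − 1/R₀²), U₀* = Λ_M/(κ+φ), V₁* = Λ_Mφ/(κ(κ+φ)), S₀₁* = Λ_N(κ+φ)/(μ(κ+φ)+αφ), I₁* = Λ_Nαφ/((γ+μ)(μ(κ+φ)+αφ)), R₁* = (γ/(ν+μ))I₁*, S₁* = (νγ/((ν+μ)μ))I₁*. Then the point E₁ = (S₀₁*, I₁*, 0, R₁*, 0, S₁*, 0, 0, 0, 0, U₀*, V₁*, 0, 0) is an equilibrium of the two-strain dengue model with the constants N = Λ_N/μ and M = Λ_M/κ; that is, the right-hand side of the system vanishes at E₁. -/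
/-- Right-hand side of the two-strain dengue model, as a vector field on `ℝ¹⁴`.
State ordering: `(S, I₁, I₂, R₁, R₂, S₁, S₂, I₁₂, I₂₁, R, U, V₁, V₂, V₁₂)`. -/
noncomputable def dengueRHS (ΛN ΛM μ κ γ ν δ α σ β N M : ℝ)
    (x : Fin 14 → ℝ) : Fin 14 → ℝ :=
  ![ΛN - α / M * x 0 * (x 11 + x 12 + 2 * x 13) - μ * x 0,
    α / M * x 0 * (x 11 + x 13) - (γ + μ) * x 1,
    α / M * x 0 * (x 12 + x 13) - (γ + μ) * x 2,
    γ * x 1 - (ν + μ) * x 3,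
    γ * x 2 - (ν + μ) * x 4,
    ν * x 3 - σ / M * x 5 * (x 12 + x 13) - μ * x 5,
    ν * x 4 - σ / M * x 6 * (x 11 + x 13) - μ * x 6,
    σ / M * x 5 * (x 12 + x 13) - (γ + μ + δ) * x 7,
    σ / M * x 6 * (x 11 + x 13) - (γ + μ + δ) * x 8,
    γ * (x 7 + x 8) - μ * x 9,
    ΛM - β / N * x 10 * (x 1 + x 2 + x 7 + x 8) - κ * x 10,
    β / N * x 10 * (x 1 + x 8) - β / N * x 11 * (x 2 + x 7) - κ * x 11,
    β / N * x 10 * (x 2 + x 7) - β / N * x 12 * (x 1 + x 8) - κ * x 12,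
    β / N * x 11 * (x 2 + x 7) + β / N * x 12 * (x 1 + x 8) - κ * x 13]

/-!
At `E₁` strain 2 and all secondary infections are absent, so the model collapses to the
one-strain host–vector model. Its equilibrium equations only involve the two forces of infection,
`α V₁* / M = α φ / (κ + φ)` on hosts and `β I₁* / N = φ` on vectors. The definition of `φ`,
rewritten with `R₀² = α β / (κ (γ + μ))`, says `(γ + μ)(α + μ) φ = μ (α β - κ (γ + μ))`, and hence
`(γ + μ)(μ (κ + φ) + α φ) = μ α β`; this makes `I₁* = Λ_N φ / (μ β)`, and every remaining
equation is a rational identity.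
-/

theorem dengueRHS_one_strain_eq_zero {ΛN ΛM μ κ γ ν δ α σ β N M S I R₁ S₁ U V : ℝ}
    (hS : ΛN = (α / M * V + μ) * S) (hI : α / M * V * S = (γ + μ) * I)
    (hR₁ : γ * I = (ν + μ) * R₁) (hS₁ : ν * R₁ = μ * S₁)
    (hU : ΛM = (β / N * I + κ) * U) (hV : β / N * I * U = κ * V) :
    dengueRHS ΛN ΛM μ κ γ ν δ α σ β N M ![S, I, 0, R₁, 0, S₁, 0, 0, 0, 0, U, V, 0, 0] = 0 := by
  funext i
  fin_cases i <;> simp [dengueRHS] <;> linarith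

section EndemicLevel

variable {α β γ κ μ φ : ℝ}

theorem endemic_level_eq {R₀ : ℝ} (hα : 0 < α) (hβ : 0 < β) (hκ : 0 < κ) (hμ : 0 < μ)
    (hγμ : 0 < γ + μ)
    (hR₀ : R₀ = Real.sqrt (α * β / (κ * (γ + μ))))
    (hφ : φ = α * β * μ / ((γ + μ) * (α + μ)) * (1 - 1 / R₀ ^ 2)) :
    (γ + μ) * (α + μ) * φ = μ * (α * β - κ * (γ + μ)) := by
  have hR₀sq : R₀ ^ 2 = α * β / (κ * (γ + μ)) := by
    rw [hR₀, Real.sq_sqrt (by positivity)]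
  rw [hφ, hR₀sq]
  field_simp

theorem endemic_denominator_eq (h : (γ + μ) * (α + μ) * φ = μ * (α * β - κ * (γ + μ))) :
    (γ + μ) * (μ * (κ + φ) + α * φ) = μ * α * β := by
  linear_combination h

theorem kappa_add_endemic_level_pos (hα : 0 < α) (hβ : 0 < β) (hκ : 0 < κ) (hμ : 0 < μ)
    (hγμ : 0 < γ + μ) (h : (γ + μ) * (α + μ) * φ = μ * (α * β - κ * (γ + μ))) :
    0 < κ + φ := by
  have : (γ + μ) * (α + μ) * (κ + φ) = (γ + μ) * κ * α + μ * α * β := by linear_combination h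
  have hpos : 0 < (γ + μ) * (α + μ) * (κ + φ) := by rw [this]; positivity
  exact pos_of_mul_pos_right hpos (by positivity)

end EndemicLevel

theorem one_strain_point_is_equilibrium_general
    (ΛN ΛM μ κ γ ν α σ β : ℝ)
    (hΛN : 0 < ΛN) (hΛM : 0 < ΛM) (hμ : 0 < μ) (hκ : 0 < κ) (hγ : 0 < γ)
    (hν : 0 < ν) (hα : 0 < α) (hβ : 0 < β)
    (R₀ φ U₀star V₁star S₀₁star I₁star R₁star S₁star : ℝ)
    (hR₀def : R₀ = Real.sqrt (α * β / (κ * (γ + μ))))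
    (hφ : φ = α * β * μ / ((γ + μ) * (α + μ)) * (1 - 1 / R₀ ^ 2))
    (hU₀ : U₀star = ΛM / (κ + φ))
    (hV₁ : V₁star = ΛM * φ / (κ * (κ + φ)))
    (hS₀₁ : S₀₁star = ΛN * (κ + φ) / (μ * (κ + φ) + α * φ))
    (hI₁ : I₁star = ΛN * α * φ / ((γ + μ) * (μ * (κ + φ) + α * φ)))
    (hR₁ : R₁star = γ / (ν + μ) * I₁star)
    (hS₁ : S₁star = ν * γ / ((ν + μ) * μ) * I₁star) :
    dengueRHS ΛN ΛM μ κ γ ν 0 α σ β (ΛN / μ) (ΛM / κ)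
        ![S₀₁star, I₁star, 0, R₁star, 0, S₁star, 0, 0, 0, 0, U₀star, V₁star, 0, 0]
      = 0 := by
  have hγμ : 0 < γ + μ := by positivity
  have hlevel := endemic_level_eq hα hβ hκ hμ hγμ hR₀def hφ
  have hκφ := kappa_add_endemic_level_pos hα hβ hκ hμ hγμ hlevel
  have hden := endemic_denominator_eq hlevel
  have hD : 0 < μ * (κ + φ) + α * φ :=
    pos_of_mul_pos_right (hden ▸ by positivity) hγμ.le
  have hhuman : α / (ΛM / κ) * V₁star = α * φ / (κ + φ) := by
    rw [hV₁]; field_simp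
  have hmosq : β / (ΛN / μ) * I₁star = φ := by
    rw [hI₁, hden]; field_simp
  apply dengueRHS_one_strain_eq_zero
  · rw [hhuman, hS₀₁]; field_simp
    rw [eq_div_iff (by linarith)]; ring
  · rw [hhuman, hS₀₁, hI₁]; field_simp
  · rw [hR₁]; field_simp
  · rw [hR₁, hS₁]; field_simp
  · rw [hmosq, hU₀]; field_simp; ring
  · rw [hmosq, hU₀, hV₁]; field_simp

/-- With `δ = 0` and `R₀ = √(αβ/(κ(γ+μ))) > 1`, the one-strain point
`E₁ = (S₀₁*, I₁*, 0, R₁*, 0, S₁*, 0, 0, 0, 0, U₀*, V₁*, 0, 0)` is an equilibrium of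
the two-strain dengue model with constants `N = Λ_N/μ` and `M = Λ_M/κ`:
the right-hand side vanishes at `E₁`. -/
theorem one_strain_point_is_equilibrium
    (ΛN ΛM μ κ γ ν α σ β : ℝ)
    (hΛN : 0 < ΛN) (hΛM : 0 < ΛM) (hμ : 0 < μ) (hκ : 0 < κ) (hγ : 0 < γ)
    (hν : 0 < ν) (hα : 0 < α) (hσ : 0 < σ) (hβ : 0 < β)
    (hR₀ : 1 < Real.sqrt (α * β / (κ * (γ + μ))))
    (R₀ φ U₀star V₁star S₀₁star I₁star R₁star S₁star : ℝ)
    (hR₀def : R₀ = Real.sqrt (α * β / (κ * (γ + μ))))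
    (hφ : φ = α * β * μ / ((γ + μ) * (α + μ)) * (1 - 1 / R₀ ^ 2))
    (hU₀ : U₀star = ΛM / (κ + φ))
    (hV₁ : V₁star = ΛM * φ / (κ * (κ + φ)))
    (hS₀₁ : S₀₁star = ΛN * (κ + φ) / (μ * (κ + φ) + α * φ))
    (hI₁ : I₁star = ΛN * α * φ / ((γ + μ) * (μ * (κ + φ) + α * φ)))
    (hR₁ : R₁star = γ / (ν + μ) * I₁star)
    (hS₁ : S₁star = ν * γ / ((ν + μ) * μ) * I₁star) :
    dengueRHS ΛN ΛM μ κ γ ν 0 α σ β (ΛN / μ) (ΛM / κ)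
        ![S₀₁star, I₁star, 0, R₁star, 0, S₁star, 0, 0, 0, 0, U₀star, V₁star, 0, 0]
      = 0 :=
  one_strain_point_is_equilibrium_general ΛN ΛM μ κ γ ν α σ β hΛN hΛM hμ hκ hγ hν hα hβ R₀ φ U₀star
    V₁star S₀₁star I₁star R₁star S₁star hR₀def hφ hU₀ hV₁ hS₀₁ hI₁ hR₁ hS₁
end

section
/- Let Λ_N, Λ_M, μ, κ, γ, ν, β be positive, δ ≥ 0, σ ≥ 0, and set α* = κ(γ+μ)/β (so R₀ = 1), S* = Λ_N/μ, U* = Λ_M/κ, γ̄ = γ+μ, ν̄ = ν+μ. Let J be the Jacobian of the right-hand side of the two-strain dengue model (with N = S*, M = U*) at the disease-free equilibrium E₀ = (S*,0,…,0,U*,0,0,0) with α = α*. For any ω₂, ω₃ ∈ ℝ, define w ∈ ℝ¹⁴ by ω₁ = −(γ̄/μ)(ω₂+ω₃), ω₄ = (γ/ν̄)ω₂, ω₅ = (γ/ν̄)ω₃, ω₆ = (νγ/(μν̄))ω₂, ω₇ = (νγ/(μν̄))ω₃, ω₈ = ω₉ = ω₁₀ = 0, ω₁₁ = −(γ̄U*/(α*S*))(ω₂+ω₃),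 ω₁₂ = (γ̄U*/(α*S*))ω₂, ω₁₃ = (γ̄U*/(α*S*))ω₃, ω₁₄ = 0. Then J·w = 0, i.e. w is a right eigenvector of J with eigenvalue 0. -/
section Vec14Aux
variable (a0 a1 a2 a3 a4 a5 a6 a7 a8 a9 a10 a11 a12 a13 : ℝ)
private abbrev dengueV := (![a0,a1,a2,a3,a4,a5,a6,a7,a8,a9,a10,a11,a12,a13] : Fin 14 → ℝ)
private lemma dv0 : dengueV a0 a1 a2 a3 a4 a5 a6 a7 a8 a9 a10 a11 a12 a13 0 = a0 := rfl
private lemma dv1 : dengueV a0 a1 a2 a3 a4 a5 a6 a7 a8 a9 a10 a11 a12 a13 1 = a1 := rfl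
private lemma dv2 : dengueV a0 a1 a2 a3 a4 a5 a6 a7 a8 a9 a10 a11 a12 a13 2 = a2 := rfl
private lemma dv3 : dengueV a0 a1 a2 a3 a4 a5 a6 a7 a8 a9 a10 a11 a12 a13 3 = a3 := rfl
private lemma dv4 : dengueV a0 a1 a2 a3 a4 a5 a6 a7 a8 a9 a10 a11 a12 a13 4 = a4 := rfl
private lemma dv5 : dengueV a0 a1 a2 a3 a4 a5 a6 a7 a8 a9 a10 a11 a12 a13 5 = a5 := rfl
private lemma dv6 : dengueV a0 a1 a2 a3 a4 a5 a6 a7 a8 a9 a10 a11 a12 a13 6 = a6 := rfl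
private lemma dv7 : dengueV a0 a1 a2 a3 a4 a5 a6 a7 a8 a9 a10 a11 a12 a13 7 = a7 := rfl
private lemma dv8 : dengueV a0 a1 a2 a3 a4 a5 a6 a7 a8 a9 a10 a11 a12 a13 8 = a8 := rfl
private lemma dv9 : dengueV a0 a1 a2 a3 a4 a5 a6 a7 a8 a9 a10 a11 a12 a13 9 = a9 := rfl
private lemma dv10 : dengueV a0 a1 a2 a3 a4 a5 a6 a7 a8 a9 a10 a11 a12 a13 10 = a10 := rfl
private lemma dv11 : dengueV a0 a1 a2 a3 a4 a5 a6 a7 a8 a9 a10 a11 a12 a13 11 = a11 := rfl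
private lemma dv12 : dengueV a0 a1 a2 a3 a4 a5 a6 a7 a8 a9 a10 a11 a12 a13 12 = a12 := rfl
private lemma dv13 : dengueV a0 a1 a2 a3 a4 a5 a6 a7 a8 a9 a10 a11 a12 a13 13 = a13 := rfl
end Vec14Aux

private lemma dengueQuadZero {g : ℝ → ℝ} (A C : ℝ) (h : ∀ t, g t = A + C * t ^ 2) :
    HasDerivAt g 0 0 := by
  have h2 : HasDerivAt (fun t : ℝ => A + C * t ^ 2) (C * ((2 : ℕ) * (0:ℝ) ^ (2 - 1))) 0 :=
    ((hasDerivAt_pow 2 (0:ℝ)).const_mul C).const_add A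
  have hg : g = fun t => A + C * t ^ 2 := funext h
  rw [hg]; simpa using h2

private lemma dengueQuadZero' {g : ℝ → ℝ} (h : ∀ t, g t = g 0 + (g 1 - g 0) * t ^ 2) :
    HasDerivAt g 0 0 := dengueQuadZero (g 0) (g 1 - g 0) h

set_option maxHeartbeats 4000000 in
/-- At the critical value `α* = κ(γ+μ)/β` (where `R₀ = 1`), the vector `w` with
components `ω₁ = −(γ̄/μ)(ω₂+ω₃)`, `ω₄ = (γ/ν̄)ω₂`, `ω₅ = (γ/ν̄)ω₃`,
`ω₆ = (νγ/(μν̄))ω₂`, `ω₇ = (νγ/(μν̄))ω₃`, `ω₈ = ω₉ = ω₁₀ = 0`,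
`ω₁₁ = −(γ̄U*/(α*S*))(ω₂+ω₃)`, `ω₁₂ = (γ̄U*/(α*S*))ω₂`, `ω₁₃ = (γ̄U*/(α*S*))ω₃`,
`ω₁₄ = 0` is a right null eigenvector of the Jacobian `J` of the two-strain dengue
model at the disease-free equilibrium `E₀ = (S*,0,…,0,U*,0,0,0)` (with `N = S*`,
`M = U*`): `J·w = 0`. -/
theorem dengue_right_null_eigenvector
    (ΛN ΛM μ κ γ ν β δ σ : ℝ)
    (hΛN : 0 < ΛN) (hΛM : 0 < ΛM) (hμ : 0 < μ) (hκ : 0 < κ) (hγ : 0 < γ)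
    (hν : 0 < ν) (hβ : 0 < β) (hδ : 0 ≤ δ) (hσ : 0 ≤ σ)
    (αstar Sstar Ustar γbar νbar : ℝ)
    (hαstar : αstar = κ * (γ + μ) / β)
    (hSstar : Sstar = ΛN / μ) (hUstar : Ustar = ΛM / κ)
    (hγbar : γbar = γ + μ) (hνbar : νbar = ν + μ)
    (J : Matrix (Fin 14) (Fin 14) ℝ)
    (hJ : HasFDerivAt (dengueRHS ΛN ΛM μ κ γ ν δ αstar σ β Sstar Ustar)
      (LinearMap.toContinuousLinearMap (Matrix.mulVecLin J))
      ![Sstar, 0, 0, 0, 0, 0, 0, 0, 0, 0, Ustar, 0, 0, 0])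
    (ω₂ ω₃ : ℝ) :
    J.mulVec
      ![-(γbar / μ) * (ω₂ + ω₃), ω₂, ω₃,
        γ / νbar * ω₂, γ / νbar * ω₃,
        ν * γ / (μ * νbar) * ω₂, ν * γ / (μ * νbar) * ω₃,
        0, 0, 0,
        -(γbar * Ustar / (αstar * Sstar)) * (ω₂ + ω₃),
        γbar * Ustar / (αstar * Sstar) * ω₂,
        γbar * Ustar / (αstar * Sstar) * ω₃, 0] = 0 := by
  set wv : Fin 14 → ℝ :=
      ![-(γbar / μ) * (ω₂ + ω₃), ω₂, ω₃,
        γ / νbar * ω₂, γ / νbar * ω₃,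
        ν * γ / (μ * νbar) * ω₂, ν * γ / (μ * νbar) * ω₃,
        0, 0, 0,
        -(γbar * Ustar / (αstar * Sstar)) * (ω₂ + ω₃),
        γbar * Ustar / (αstar * Sstar) * ω₂,
        γbar * Ustar / (αstar * Sstar) * ω₃, 0] with hwv
  set x0 : Fin 14 → ℝ := ![Sstar, 0, 0, 0, 0, 0, 0, 0, 0, 0, Ustar, 0, 0, 0] with hx0
  have hS0 : Sstar ≠ 0 := by rw [hSstar]; positivity
  have hU0 : Ustar ≠ 0 := by rw [hUstar]; positivity
  clear hSstar hUstar
  subst hγbar hνbar hαstar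
  have h1' : μ ≠ 0 := hμ.ne'
  have h2' : κ ≠ 0 := hκ.ne'
  have h3' : β ≠ 0 := hβ.ne'
  have h4' : ν + μ ≠ 0 := by positivity
  have h5' : γ + μ ≠ 0 := by positivity
  have comp0 : HasDerivAt
      (fun t : ℝ => dengueRHS ΛN ΛM μ κ γ ν δ (κ * (γ + μ) / β) σ β Sstar Ustar (x0 + t • wv) 0)
      0 0 := by
    simp only [dengueRHS, hwv, hx0, Pi.add_apply, Pi.smul_apply, smul_eq_mul,
      dv0, dv1, dv2, dv3, dv4, dv5, dv6, dv7, dv8, dv9, dv10, dv11, dv12, dv13]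
    apply dengueQuadZero'
    intro t
    field_simp
    try ring
  have comp1 : HasDerivAt
      (fun t : ℝ => dengueRHS ΛN ΛM μ κ γ ν δ (κ * (γ + μ) / β) σ β Sstar Ustar (x0 + t • wv) 1)
      0 0 := by
    simp only [dengueRHS, hwv, hx0, Pi.add_apply, Pi.smul_apply, smul_eq_mul,
      dv0, dv1, dv2, dv3, dv4, dv5, dv6, dv7, dv8, dv9, dv10, dv11, dv12, dv13]
    apply dengueQuadZero'
    intro t
    field_simp
    try ring
  have comp2 : HasDerivAt
      (fun t : ℝ => dengueRHS ΛN ΛM μ κ γ ν δ (κ * (γ + μ) / β) σ β Sstar Ustar (x0 + t • wv) 2)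
      0 0 := by
    simp only [dengueRHS, hwv, hx0, Pi.add_apply, Pi.smul_apply, smul_eq_mul,
      dv0, dv1, dv2, dv3, dv4, dv5, dv6, dv7, dv8, dv9, dv10, dv11, dv12, dv13]
    apply dengueQuadZero'
    intro t
    field_simp
    try ring
  have comp3 : HasDerivAt
      (fun t : ℝ => dengueRHS ΛN ΛM μ κ γ ν δ (κ * (γ + μ) / β) σ β Sstar Ustar (x0 + t • wv) 3)
      0 0 := by
    simp only [dengueRHS, hwv, hx0, Pi.add_apply, Pi.smul_apply, smul_eq_mul,
      dv0, dv1, dv2, dv3, dv4, dv5, dv6, dv7, dv8, dv9, dv10, dv11, dv12, dv13]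
    apply dengueQuadZero'
    intro t
    field_simp
    try ring
  have comp4 : HasDerivAt
      (fun t : ℝ => dengueRHS ΛN ΛM μ κ γ ν δ (κ * (γ + μ) / β) σ β Sstar Ustar (x0 + t • wv) 4)
      0 0 := by
    simp only [dengueRHS, hwv, hx0, Pi.add_apply, Pi.smul_apply, smul_eq_mul,
      dv0, dv1, dv2, dv3, dv4, dv5, dv6, dv7, dv8, dv9, dv10, dv11, dv12, dv13]
    apply dengueQuadZero'
    intro t
    field_simp
    try ring
  have comp5 : HasDerivAt
      (fun t : ℝ => dengueRHS ΛN ΛM μ κ γ ν δ (κ * (γ + μ) / β) σ β Sstar Ustar (x0 + t • wv) 5)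
      0 0 := by
    simp only [dengueRHS, hwv, hx0, Pi.add_apply, Pi.smul_apply, smul_eq_mul,
      dv0, dv1, dv2, dv3, dv4, dv5, dv6, dv7, dv8, dv9, dv10, dv11, dv12, dv13]
    apply dengueQuadZero'
    intro t
    field_simp
    try ring
  have comp6 : HasDerivAt
      (fun t : ℝ => dengueRHS ΛN ΛM μ κ γ ν δ (κ * (γ + μ) / β) σ β Sstar Ustar (x0 + t • wv) 6)
      0 0 := by
    simp only [dengueRHS, hwv, hx0, Pi.add_apply, Pi.smul_apply, smul_eq_mul,
      dv0, dv1, dv2, dv3, dv4, dv5, dv6, dv7, dv8, dv9, dv10, dv11, dv12, dv13]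
    apply dengueQuadZero'
    intro t
    field_simp
    try ring
  have comp7 : HasDerivAt
      (fun t : ℝ => dengueRHS ΛN ΛM μ κ γ ν δ (κ * (γ + μ) / β) σ β Sstar Ustar (x0 + t • wv) 7)
      0 0 := by
    simp only [dengueRHS, hwv, hx0, Pi.add_apply, Pi.smul_apply, smul_eq_mul,
      dv0, dv1, dv2, dv3, dv4, dv5, dv6, dv7, dv8, dv9, dv10, dv11, dv12, dv13]
    apply dengueQuadZero'
    intro t
    field_simp
    try ring
  have comp8 : HasDerivAt
      (fun t : ℝ => dengueRHS ΛN ΛM μ κ γ ν δ (κ * (γ + μ) / β) σ β Sstar Ustar (x0 + t • wv) 8)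
      0 0 := by
    simp only [dengueRHS, hwv, hx0, Pi.add_apply, Pi.smul_apply, smul_eq_mul,
      dv0, dv1, dv2, dv3, dv4, dv5, dv6, dv7, dv8, dv9, dv10, dv11, dv12, dv13]
    apply dengueQuadZero'
    intro t
    field_simp
    try ring
  have comp9 : HasDerivAt
      (fun t : ℝ => dengueRHS ΛN ΛM μ κ γ ν δ (κ * (γ + μ) / β) σ β Sstar Ustar (x0 + t • wv) 9)
      0 0 := by
    simp only [dengueRHS, hwv, hx0, Pi.add_apply, Pi.smul_apply, smul_eq_mul,
      dv0, dv1, dv2, dv3, dv4, dv5, dv6, dv7, dv8, dv9, dv10, dv11, dv12, dv13]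
    apply dengueQuadZero'
    intro t
    field_simp
    try ring
  have comp10 : HasDerivAt
      (fun t : ℝ => dengueRHS ΛN ΛM μ κ γ ν δ (κ * (γ + μ) / β) σ β Sstar Ustar (x0 + t • wv) 10)
      0 0 := by
    simp only [dengueRHS, hwv, hx0, Pi.add_apply, Pi.smul_apply, smul_eq_mul,
      dv0, dv1, dv2, dv3, dv4, dv5, dv6, dv7, dv8, dv9, dv10, dv11, dv12, dv13]
    apply dengueQuadZero'
    intro t
    field_simp
    try ring
  have comp11 : HasDerivAt
      (fun t : ℝ => dengueRHS ΛN ΛM μ κ γ ν δ (κ * (γ + μ) / β) σ β Sstar Ustar (x0 + t • wv) 11)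
      0 0 := by
    simp only [dengueRHS, hwv, hx0, Pi.add_apply, Pi.smul_apply, smul_eq_mul,
      dv0, dv1, dv2, dv3, dv4, dv5, dv6, dv7, dv8, dv9, dv10, dv11, dv12, dv13]
    apply dengueQuadZero'
    intro t
    field_simp
    try ring
  have comp12 : HasDerivAt
      (fun t : ℝ => dengueRHS ΛN ΛM μ κ γ ν δ (κ * (γ + μ) / β) σ β Sstar Ustar (x0 + t • wv) 12)
      0 0 := by
    simp only [dengueRHS, hwv, hx0, Pi.add_apply, Pi.smul_apply, smul_eq_mul,
      dv0, dv1, dv2, dv3, dv4, dv5, dv6, dv7, dv8, dv9, dv10, dv11, dv12, dv13]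
    apply dengueQuadZero'
    intro t
    field_simp
    try ring
  have comp13 : HasDerivAt
      (fun t : ℝ => dengueRHS ΛN ΛM μ κ γ ν δ (κ * (γ + μ) / β) σ β Sstar Ustar (x0 + t • wv) 13)
      0 0 := by
    simp only [dengueRHS, hwv, hx0, Pi.add_apply, Pi.smul_apply, smul_eq_mul,
      dv0, dv1, dv2, dv3, dv4, dv5, dv6, dv7, dv8, dv9, dv10, dv11, dv12, dv13]
    apply dengueQuadZero'
    intro t
    field_simp
    try ring
  have h2 : HasDerivAt
      (fun t : ℝ => dengueRHS ΛN ΛM μ κ γ ν δ (κ * (γ + μ) / β) σ β Sstar Ustar (x0 + t • wv))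
      (0 : Fin 14 → ℝ) 0 := by
    rw [hasDerivAt_pi]
    intro i
    fin_cases i
    exacts [comp0, comp1, comp2, comp3, comp4, comp5, comp6, comp7, comp8, comp9,
      comp10, comp11, comp12, comp13]
  have hc : HasDerivAt (fun t : ℝ => x0 + t • wv) wv 0 := by
    simpa using (((hasDerivAt_id (0:ℝ)).smul_const wv).const_add x0)
  have h0 : (fun t : ℝ => x0 + t • wv) 0 = x0 := by simp
  rw [← h0] at hJ
  have h1 := hJ.comp_hasDerivAt 0 hc
  simp only [Function.comp_def, LinearMap.coe_toContinuousLinearMap',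
    Matrix.mulVecLin_apply] at h1
  exact h1.unique h2
end

section
/- Let Λ_N, Λ_M, μ, κ, γ, ν, β be positive, δ ≥ 0, σ ≥ 0, and set α* = κ(γ+μ)/β, S* = Λ_N/μ, U* = Λ_M/κ, γ̄ = γ+μ, δ̄ = δ+γ+μ. Let J be the Jacobian of the right-hand side of the two-strain dengue model (with N = S*, M = U*) at the disease-free equilibrium E₀ = (S*,0,…,0,U*,0,0,0) with α = α*. For any v₂, v₃ ∈ ℝ, define v ∈ ℝ¹⁴ by v₁ = v₄ = v₅ = v₆ = v₇ = v₁₀ = v₁₁ = 0, v₈ = (γ̄/δ̄)v₃, v₉ = (γ̄/δ̄)v₂, v₁₂ = (α*S*/(κU*))v₂, v₁₃ = (α*S*/(κU*))v₃, v₁₄ = (α*S*/(κU*))(v₂+v₃). Then vᵀ·J = 0, i.e. v is a left eigenvector of J with eigenvalue 0. -/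
open Matrix

theorem Matrix.vecMul_eq_zero_of_hasFDerivAt {𝕜 ι : Type*} [NontriviallyNormedField 𝕜]
    [CompleteSpace 𝕜] [Fintype ι] [DecidableEq ι] {f : (ι → 𝕜) → ι → 𝕜} {J : Matrix ι ι 𝕜}
    {p w : ι → 𝕜} (hf : HasFDerivAt f (LinearMap.toContinuousLinearMap (mulVecLin J)) p)
    {c : 𝕜} (hw : ∀ j (t : 𝕜), w ⬝ᵥ f (p + t • Pi.single j 1) = c) :
    vecMul w J = 0 := by
  funext j
  have hline : HasDerivAt (fun t : 𝕜 => p + t • Pi.single j 1) (Pi.single j 1) 0 := by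
    simpa using ((hasDerivAt_id (0 : 𝕜)).smul_const (Pi.single j (1 : 𝕜))).const_add p
  have hf_line :
      HasDerivAt (fun t : 𝕜 => f (p + t • Pi.single j 1)) (J.mulVec (Pi.single j 1)) 0 :=
    hf.comp_hasDerivAt_of_eq 0 hline (by simp)
  have hpair : HasDerivAt (fun t : 𝕜 => w ⬝ᵥ f (p + t • Pi.single j 1))
      (w ⬝ᵥ J.mulVec (Pi.single j 1)) 0 :=
    HasDerivAt.fun_sum fun i _ => (hasDerivAt_pi.1 hf_line i).const_mul (w i)
  rw [funext (hw j)] at hpair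
  rw [← dotProduct_single_one (vecMul w J) j, ← dotProduct_mulVec]
  exact hpair.unique (hasDerivAt_const 0 _)

noncomputable def dengueDFE (S U : ℝ) : Fin 14 → ℝ :=
  ![S, 0, 0, 0, 0, 0, 0, 0, 0, 0, U, 0, 0, 0]

noncomputable def dengueNullCovector (μ κ γ δ α S U v₂ v₃ : ℝ) : Fin 14 → ℝ :=
  ![0, v₂, v₃, 0, 0, 0, 0,
    (γ + μ) / (δ + γ + μ) * v₃, (γ + μ) / (δ + γ + μ) * v₂, 0, 0,
    α * S / (κ * U) * v₂, α * S / (κ * U) * v₃, α * S / (κ * U) * (v₂ + v₃)]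

section

variable {ΛN ΛM μ κ γ ν δ σ β α S U : ℝ}

theorem dengueNullCovector_dotProduct_dengueRHS_DFE_add (hα : α = κ * (γ + μ) / β)
    (hS : S ≠ 0) (hU : U ≠ 0) (hκ : κ ≠ 0) (hβ : β ≠ 0) (hδ : δ + γ + μ ≠ 0) (v₂ v₃ : ℝ)
    (h : Fin 14 → ℝ) :
    dengueNullCovector μ κ γ δ α S U v₂ v₃ ⬝ᵥ
      dengueRHS ΛN ΛM μ κ γ ν δ α σ β S U (dengueDFE S U + h) =
    v₂ * (α / U * h 0 * (h 11 + h 13) + (γ + μ) / (δ + γ + μ) * σ / U * h 6 * (h 11 + h 13)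
        + (γ + μ) / U * (h 10 + h 12) * (h 1 + h 8)) +
    v₃ * (α / U * h 0 * (h 12 + h 13) + (γ + μ) / (δ + γ + μ) * σ / U * h 5 * (h 12 + h 13)
        + (γ + μ) / U * (h 10 + h 11) * (h 2 + h 7)) := by
  simp only [dengueNullCovector, dengueDFE, dengueRHS, dotProduct, Fin.sum_univ_succ,
    Fin.sum_univ_zero, Pi.add_apply, Fin.succ_zero_eq_one, Fin.succ_one_eq_two, Fin.reduceSucc,
    cons_val_zero, cons_val_one, cons_val, zero_add, add_zero, zero_mul]
  subst hα
  field_simp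
  ring

theorem dengueNullCovector_dotProduct_dengueRHS_DFE_line (hα : α = κ * (γ + μ) / β)
    (hS : S ≠ 0) (hU : U ≠ 0) (hκ : κ ≠ 0) (hβ : β ≠ 0) (hδ : δ + γ + μ ≠ 0) (v₂ v₃ : ℝ)
    (j : Fin 14) (t : ℝ) :
    dengueNullCovector μ κ γ δ α S U v₂ v₃ ⬝ᵥ
      dengueRHS ΛN ΛM μ κ γ ν δ α σ β S U (dengueDFE S U + t • Pi.single j 1) = 0 := by
  rw [dengueNullCovector_dotProduct_dengueRHS_DFE_add hα hS hU hκ hβ hδ v₂ v₃]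
  fin_cases j <;> simp

end

theorem dengue_left_null_eigenvector_general
    (ΛN ΛM μ κ γ ν β δ σ : ℝ)
    (hΛN : 0 < ΛN) (hΛM : 0 < ΛM) (hμ : 0 < μ) (hκ : 0 < κ) (hγ : 0 < γ)
    (hβ : 0 < β) (hδ : 0 ≤ δ)
    (αstar Sstar Ustar γbar δbar : ℝ)
    (hαstar : αstar = κ * (γ + μ) / β)
    (hSstar : Sstar = ΛN / μ) (hUstar : Ustar = ΛM / κ)
    (hγbar : γbar = γ + μ) (hδbar : δbar = δ + γ + μ)
    (J : Matrix (Fin 14) (Fin 14) ℝ)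
    (hJ : HasFDerivAt (dengueRHS ΛN ΛM μ κ γ ν δ αstar σ β Sstar Ustar)
      (LinearMap.toContinuousLinearMap (Matrix.mulVecLin J))
      ![Sstar, 0, 0, 0, 0, 0, 0, 0, 0, 0, Ustar, 0, 0, 0])
    (v₂ v₃ : ℝ) :
    Matrix.vecMul
      ![0, v₂, v₃, 0, 0, 0, 0,
        γbar / δbar * v₃, γbar / δbar * v₂, 0, 0,
        αstar * Sstar / (κ * Ustar) * v₂,
        αstar * Sstar / (κ * Ustar) * v₃,
        αstar * Sstar / (κ * Ustar) * (v₂ + v₃)] J = 0 := by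
  subst hγbar hδbar
  have hS : Sstar ≠ 0 := by rw [hSstar]; positivity
  have hU : Ustar ≠ 0 := by rw [hUstar]; positivity
  exact Matrix.vecMul_eq_zero_of_hasFDerivAt (p := dengueDFE Sstar Ustar) hJ
    (dengueNullCovector_dotProduct_dengueRHS_DFE_line hαstar hS hU hκ.ne' hβ.ne' (by positivity)
      v₂ v₃)

/-- At the critical value `α* = κ(γ+μ)/β` (where `R₀ = 1`), the vector `v` with
components `v₁ = v₄ = v₅ = v₆ = v₇ = v₁₀ = v₁₁ = 0`, `v₈ = (γ̄/δ̄)v₃`,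
`v₉ = (γ̄/δ̄)v₂`, `v₁₂ = (α*S*/(κU*))v₂`, `v₁₃ = (α*S*/(κU*))v₃`,
`v₁₄ = (α*S*/(κU*))(v₂+v₃)` is a left null eigenvector of the Jacobian `J` of the
two-strain dengue model at the disease-free equilibrium `E₀ = (S*,0,…,0,U*,0,0,0)`
(with `N = S*`, `M = U*`): `vᵀ·J = 0`. -/
theorem dengue_left_null_eigenvector
    (ΛN ΛM μ κ γ ν β δ σ : ℝ)
    (hΛN : 0 < ΛN) (hΛM : 0 < ΛM) (hμ : 0 < μ) (hκ : 0 < κ) (hγ : 0 < γ)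
    (hν : 0 < ν) (hβ : 0 < β) (hδ : 0 ≤ δ) (hσ : 0 ≤ σ)
    (αstar Sstar Ustar γbar δbar : ℝ)
    (hαstar : αstar = κ * (γ + μ) / β)
    (hSstar : Sstar = ΛN / μ) (hUstar : Ustar = ΛM / κ)
    (hγbar : γbar = γ + μ) (hδbar : δbar = δ + γ + μ)
    (J : Matrix (Fin 14) (Fin 14) ℝ)
    (hJ : HasFDerivAt (dengueRHS ΛN ΛM μ κ γ ν δ αstar σ β Sstar Ustar)
      (LinearMap.toContinuousLinearMap (Matrix.mulVecLin J))
      ![Sstar, 0, 0, 0, 0, 0, 0, 0, 0, 0, Ustar, 0, 0, 0])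
    (v₂ v₃ : ℝ) :
    Matrix.vecMul
      ![0, v₂, v₃, 0, 0, 0, 0,
        γbar / δbar * v₃, γbar / δbar * v₂, 0, 0,
        αstar * Sstar / (κ * Ustar) * v₂,
        αstar * Sstar / (κ * Ustar) * v₃,
        αstar * Sstar / (κ * Ustar) * (v₂ + v₃)] J = 0 :=
  dengue_left_null_eigenvector_general ΛN ΛM μ κ γ ν β δ σ hΛN hΛM hμ hκ hγ hβ hδ αstar Sstar Ustar
    γbar δbar hαstar hSstar hUstar hγbar hδbar J hJ v₂ v₃
end

section
/- Let A₁, A₂, α*, v₂, v₃, ω₂, ω₃ be positive real numbers and set a = −A₁(v₂ω₂ + v₃ω₃)(ω₂ + ω₃) + (A₂/α*)(v₂ + v₃)ω₂ω₃. If α* > A₂/A₁, then a < 0; in particular, the backward-bifurcation condition a > 0 cannot hold when α* > A₂/A₁. -/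
/-!
Writing `X = (v₂ω₂ + v₃ω₃)(ω₂ + ω₃)` and `Y = (v₂ + v₃)ω₂ω₃`, we have `a = -A₁X + (A₂/α*)Y`.
Expanding, `X = Y + v₂ω₂² + v₃ω₃² > Y > 0`, while `α* > A₂/A₁` says `A₂/α* < A₁`;
hence `(A₂/α*)Y < A₁X`.
-/

theorem add_mul_mul_lt_mul_add_mul_mul_add {R : Type*} [CommRing R] [LinearOrder R]
    [IsStrictOrderedRing R] {v₂ v₃ ω₂ ω₃ : R} (hv₂ : 0 < v₂) (hv₃ : 0 ≤ v₃) (hω₂ : ω₂ ≠ 0) :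
    (v₂ + v₃) * (ω₂ * ω₃) < (v₂ * ω₂ + v₃ * ω₃) * (ω₂ + ω₃) := by
  have hexpand : (v₂ * ω₂ + v₃ * ω₃) * (ω₂ + ω₃)
      = (v₂ + v₃) * (ω₂ * ω₃) + (v₂ * ω₂ ^ 2 + v₃ * ω₃ ^ 2) := by ring
  rw [hexpand]
  exact lt_add_of_pos_right _ (by positivity)

theorem no_backward_bifurcation_above_ratio_general
    (A₁ A₂ αstar v₂ v₃ ω₂ ω₃ : ℝ)
    (hA₁ : 0 < A₁) (hαstar : 0 < αstar)
    (hv₂ : 0 < v₂) (hv₃ : 0 < v₃) (hω₂ : 0 < ω₂) (hω₃ : 0 < ω₃)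
    (a : ℝ)
    (ha : a = -A₁ * ((v₂ * ω₂ + v₃ * ω₃) * (ω₂ + ω₃)) +
        A₂ / αstar * ((v₂ + v₃) * (ω₂ * ω₃)))
    (hgt : A₂ / A₁ < αstar) :
    a < 0 ∧ ¬ (0 < a) := by
  have hratio : A₂ / αstar < A₁ := (div_lt_comm₀ hA₁ hαstar).1 hgt
  have hY : 0 < (v₂ + v₃) * (ω₂ * ω₃) := by positivity
  have hYX := add_mul_mul_lt_mul_add_mul_mul_add hv₂ hv₃.le hω₂.ne' (ω₃ := ω₃)
  have hneg : a < 0 := by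
    rw [ha]
    linarith [mul_lt_mul hratio hYX.le hY hA₁.le]
  exact ⟨hneg, hneg.asymm⟩

/-- If `α* > A₂/A₁`, then the bifurcation coefficient
`a = −A₁(v₂ω₂ + v₃ω₃)(ω₂ + ω₃) + (A₂/α*)(v₂ + v₃)ω₂ω₃` is negative; in particular
the backward-bifurcation condition `a > 0` cannot hold. -/
theorem no_backward_bifurcation_above_ratio
    (A₁ A₂ αstar v₂ v₃ ω₂ ω₃ : ℝ)
    (hA₁ : 0 < A₁) (hA₂ : 0 < A₂) (hαstar : 0 < αstar)
    (hv₂ : 0 < v₂) (hv₃ : 0 < v₃) (hω₂ : 0 < ω₂) (hω₃ : 0 < ω₃)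
    (a : ℝ)
    (ha : a = -A₁ * ((v₂ * ω₂ + v₃ * ω₃) * (ω₂ + ω₃)) +
        A₂ / αstar * ((v₂ + v₃) * (ω₂ * ω₃)))
    (hgt : A₂ / A₁ < αstar) :
    a < 0 ∧ ¬ (0 < a) :=
  no_backward_bifurcation_above_ratio_general A₁ A₂ αstar v₂ v₃ ω₂ ω₃ hA₁ hαstar hv₂ hv₃ hω₂ hω₃ a
    ha hgt
end
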